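/- (Pointwise sufficient condition, feature-label, ε > 0.) Let P = α₁·P₁ + α₂·P₂ + (1−α)·P₀ with α₁ > 0, α₂ ≥ 0, α = α₁ + α₂ ≤ 1, where P₁ is the feature-label collective distribution with target y₁* and signal map g₁, and P₂ is an arbitrary PMF on X × Y. Fix ε₁ ∈ [0, 1/2) and let x ∈ X₁ satisfy P₁(x) > 0. If α₁·(1−2ε₁)·P₁(x) > α₂·P₂(x)·((1−ε₁)·Δ_{P₂,x}(y₁*) + ε₁) + (1−α)·P₀(x)·((1−ε₁)·Δ_{P₀,x}(y₁*) + ε₁), then the mixture satisfies P(x, y₁*) > P(x, y) + (ε₁/(1−ε₁))·P(x) for every y ≠ y₁*. -/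

import Mathlib

/-!
At `x` the collective distribution `P₁` puts all of its mass on the label `y₁*`, so its
share of the margin `P(x, y₁*) − P(x, y)` is `α₁ P₁(x)`, while any other component `Q` lowers
that margin by at most `Q(x) Δ_{Q,x}(y₁*)`. Multiplying this lower bound by `1 − ε₁` and
comparing with `ε₁ P(x)` is exactly the hypothesis.
-/

open Finset

noncomputable section

variable {X Y : Type*}

/-- A probability mass function on `X × Y`. -/
def IsPMF [Fintype X] [Fintype Y] (P : X × Y → ℝ) : Prop :=
  (∀ z, 0 ≤ P z) ∧ ∑ z, P z = 1

/-- The `X`-marginal `P(x) = ∑_y P(x,y)`. -/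
def marg [Fintype Y] (P : X × Y → ℝ) (x : X) : ℝ := ∑ y, P (x, y)

/-- The conditional probability `P(y | x) = P(x,y) / P(x)` (zero when `P(x) = 0`,
by the `division by zero = 0` convention). -/
def condProb [Fintype Y] (P : X × Y → ℝ) (y : Y) (x : X) : ℝ := P (x, y) / marg P x

/-- Pointwise suboptimality gap `Δ_{Q,x}(y*) = max_y Q(y|x) − Q(y*|x)` when `Q(x) > 0`,
and `0` otherwise. -/
def gapAt [Fintype Y] [Nonempty Y] (Q : X × Y → ℝ) (x : X) (ystar : Y) : ℝ :=
  if 0 < marg Q x then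
    (Finset.univ.sup' Finset.univ_nonempty fun y => condProb Q y x) - condProb Q ystar x
  else 0

/-- Suboptimality gap `Δ_Q(X₁, y*) = max_{x ∈ X₁} Δ_{Q,x}(y*)` of the signal set
`X₁ = g(X)` on `Q`. -/
def gapSig [Fintype X] [Fintype Y] [Nonempty X] [Nonempty Y] [DecidableEq X]
    (Q : X × Y → ℝ) (g : X → X) (ystar : Y) : ℝ :=
  (Finset.univ.image g).sup' (Finset.univ_nonempty.image g) fun x => gapAt Q x ystar

/-- Overlap `Q(X₁) = ∑_{x ∈ X₁} Q(x)` of `Q` with the signal set `X₁ = g(X)`. -/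
def overlap [Fintype X] [Fintype Y] [DecidableEq X] (Q : X × Y → ℝ) (g : X → X) : ℝ :=
  ∑ x ∈ Finset.univ.image g, marg Q x

/-- Total variation distance between two PMFs on `X × Y`. -/
def tvDist [Fintype X] [Fintype Y] (P P' : X × Y → ℝ) : ℝ :=
  (1 / 2) * ∑ z, |P z - P' z|

/-- A classifier `f` is `ε`-suboptimal under `P` if there is a PMF `P'` within total
variation `ε` of `P` such that `f x` maximizes `y ↦ P'(y|x)` for every `x` with
`P'(x) > 0`. -/
def Suboptimal [Fintype X] [Fintype Y] (P : X × Y → ℝ) (ε : ℝ) (f : X → Y) : Prop :=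
  ∃ P' : X × Y → ℝ, IsPMF P' ∧ tvDist P P' ≤ ε ∧
    ∀ x, 0 < marg P' x → ∀ y, condProb P' y x ≤ condProb P' (f x) x

/-- Pushforward of `P` along a map `m : X × Y → X × Y`. -/
def pushforward [Fintype X] [Fintype Y] [DecidableEq X] [DecidableEq Y]
    (m : X × Y → X × Y) (P : X × Y → ℝ) : X × Y → ℝ :=
  fun z => ∑ w ∈ Finset.univ.filter (fun w => m w = z), P w

/-- Success rate `S = Pr_{x ∼ P₀-X-marginal}[f (g x) = y*]`. -/
def successRate [Fintype X] [Fintype Y] [DecidableEq Y]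
    (P0 : X × Y → ℝ) (f : X → Y) (g : X → X) (ystar : Y) : ℝ :=
  ∑ x ∈ Finset.univ.filter (fun x => f (g x) = ystar), marg P0 x

/-- Mass `P₀(g⁻¹({x*}))` of the preimage of `x*` under the `X`-marginal of `P₀`. -/
def preMass [Fintype X] [Fintype Y] [DecidableEq X]
    (P0 : X × Y → ℝ) (g : X → X) (xstar : X) : ℝ :=
  ∑ x ∈ Finset.univ.filter (fun x => g x = xstar), marg P0 x

section

variable [Fintype Y]

lemma marg_nonneg {Q : X × Y → ℝ} (hQ : ∀ z, 0 ≤ Q z) (x : X) : 0 ≤ marg Q x :=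
  Finset.sum_nonneg fun _ _ => hQ _

lemma marg_eq_apply_of_forall_ne {Q : X × Y → ℝ} {x : X} {y₀ : Y}
    (h : ∀ y, y ≠ y₀ → Q (x, y) = 0) : marg Q x = Q (x, y₀) :=
  Finset.sum_eq_single_of_mem y₀ (mem_univ _) fun y _ hy => h y hy

lemma marg_mul_add_mul_add_mul (a b c : ℝ) (Q R S : X × Y → ℝ) (x : X) :
    marg (fun z => a * Q z + b * R z + c * S z) x = a * marg Q x + b * marg R x + c * marg S x := by
  simp only [marg, Finset.sum_add_distrib, Finset.mul_sum]

lemma apply_sub_apply_le_marg_mul_gapAt [Nonempty Y] {Q : X × Y → ℝ} (hQ : ∀ z, 0 ≤ Q z)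
    (x : X) (ystar y : Y) : Q (x, y) - Q (x, ystar) ≤ marg Q x * gapAt Q x ystar := by
  unfold gapAt
  split_ifs with hpos
  · have hle : condProb Q y x ≤ univ.sup' univ_nonempty fun y => condProb Q y x :=
      Finset.le_sup' (fun y => condProb Q y x) (mem_univ y)
    have hmul : ∀ y, Q (x, y) = marg Q x * condProb Q y x := fun y => by
      rw [condProb, mul_div_cancel₀ _ hpos.ne']
    rw [hmul y, hmul ystar, ← mul_sub]
    gcongr
  · have hzero : marg Q x = 0 := le_antisymm (not_lt.mp hpos) (marg_nonneg hQ x)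
    have hQx : ∀ y, Q (x, y) = 0 := fun y =>
      (Finset.sum_eq_zero_iff_of_nonneg fun y _ => hQ (x, y)).mp hzero y (mem_univ _)
    simp [hQx]

variable [Fintype X] [DecidableEq X] [DecidableEq Y]

lemma pushforward_apply_eq_zero_of_notMem_range {m : X × Y → X × Y} (P : X × Y → ℝ)
    {z : X × Y} (hz : z ∉ Set.range m) : pushforward m P z = 0 := by
  rw [pushforward, Finset.filter_false_of_mem fun w _ hw => hz ⟨w, hw⟩, Finset.sum_empty]

lemma pushforward_const_snd_apply_of_ne (g : X → X) (ystar : Y) (P : X × Y → ℝ) (x : X)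
    {y : Y} (hy : y ≠ ystar) : pushforward (fun w => (g w.1, ystar)) P (x, y) = 0 :=
  pushforward_apply_eq_zero_of_notMem_range P fun ⟨_, hw⟩ => hy (congrArg Prod.snd hw).symm

end

theorem pointwise_feature_label_eps_pos_general
    [Fintype X] [Fintype Y] [Nonempty Y] [DecidableEq X] [DecidableEq Y]
    (P0 P2 : X × Y → ℝ) (hP0 : IsPMF P0) (hP2 : IsPMF P2)
    (g1 : X → X) (y1 : Y)
    (P1 : X × Y → ℝ) (hP1 : P1 = pushforward (fun w => (g1 w.1, y1)) P0)
    (α1 α2 : ℝ) (hα2 : 0 ≤ α2) (hα : α1 + α2 ≤ 1)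
    (ε1 : ℝ) (hε1 : ε1 < 1 / 2)
    (P : X × Y → ℝ) (hP : P = fun z => α1 * P1 z + α2 * P2 z + (1 - (α1 + α2)) * P0 z)
    (x : X)
    (hcond : α1 * (1 - 2 * ε1) * marg P1 x >
      α2 * marg P2 x * ((1 - ε1) * gapAt P2 x y1 + ε1)
        + (1 - (α1 + α2)) * marg P0 x * ((1 - ε1) * gapAt P0 x y1 + ε1)) :
    ∀ y, y ≠ y1 → P (x, y1) > P (x, y) + ε1 / (1 - ε1) * marg P x := by
  intro y hy
  have hP1_off : ∀ y', y' ≠ y1 → P1 (x, y') = 0 := fun y' hy' => by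
    rw [hP1]; exact pushforward_const_snd_apply_of_ne g1 y1 P0 x hy'
  have hmarg1 : marg P1 x = P1 (x, y1) := marg_eq_apply_of_forall_ne hP1_off
  have hgap2 := mul_le_mul_of_nonneg_left (apply_sub_apply_le_marg_mul_gapAt hP2.1 x y1 y) hα2
  have hgap0 := mul_le_mul_of_nonneg_left (apply_sub_apply_le_marg_mul_gapAt hP0.1 x y1 y)
    (sub_nonneg.mpr hα)
  have hmargin : α1 * marg P1 x - α2 * (marg P2 x * gapAt P2 x y1)
      - (1 - (α1 + α2)) * (marg P0 x * gapAt P0 x y1) ≤ P (x, y1) - P (x, y) := by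
    simp only [hP, hmarg1, hP1_off y hy, mul_zero]
    linarith
  have hε : 0 < 1 - ε1 := by linarith
  have hmarg : marg P x = α1 * marg P1 x + α2 * marg P2 x + (1 - (α1 + α2)) * marg P0 x := by
    rw [hP, marg_mul_add_mul_add_mul]
  have hkey : ε1 * marg P x < (1 - ε1) * (P (x, y1) - P (x, y)) := by
    rw [hmarg]
    linarith [mul_le_mul_of_nonneg_left hmargin hε.le]
  rw [gt_iff_lt, ← lt_sub_iff_add_lt', div_mul_eq_mul_div, div_lt_iff₀ hε]
  linarith

/-- pointwise sufficient condition, feature-label, ε > 0. -/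
theorem pointwise_feature_label_eps_pos
    [Fintype X] [Fintype Y] [Nonempty X] [Nonempty Y] [DecidableEq X] [DecidableEq Y]
    (P0 P2 : X × Y → ℝ) (hP0 : IsPMF P0) (hP2 : IsPMF P2)
    (g1 : X → X) (hg1 : Function.Injective g1) (y1 : Y)
    (P1 : X × Y → ℝ) (hP1 : P1 = pushforward (fun w => (g1 w.1, y1)) P0)
    (α1 α2 : ℝ) (hα1 : 0 < α1) (hα2 : 0 ≤ α2) (hα : α1 + α2 ≤ 1)
    (ε1 : ℝ) (hε0 : 0 ≤ ε1) (hε1 : ε1 < 1 / 2)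
    (P : X × Y → ℝ) (hP : P = fun z => α1 * P1 z + α2 * P2 z + (1 - (α1 + α2)) * P0 z)
    (x : X) (hx : x ∈ Finset.univ.image g1) (hx1 : 0 < marg P1 x)
    (hcond : α1 * (1 - 2 * ε1) * marg P1 x >
      α2 * marg P2 x * ((1 - ε1) * gapAt P2 x y1 + ε1)
        + (1 - (α1 + α2)) * marg P0 x * ((1 - ε1) * gapAt P0 x y1 + ε1)) :
    ∀ y, y ≠ y1 → P (x, y1) > P (x, y) + ε1 / (1 - ε1) * marg P x :=
  pointwise_feature_label_eps_pos_general P0 P2 hP0 hP2 g1 y1 P1 hP1 α1 α2 hα2 hα ε1 hε1 P hP x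
    hcond
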